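/- arXiv:2505.07555 — 5 statements merged into one kernel-verified Lean document; each statement's English description precedes it below -/
import Mathlib

section
/- Let N ≥ 1, let h : Fin N → ℝ be strictly positive channel gains, let σ² > 0 be the noise power, let P_f > 0 be the fixed circuit power, and let Pmax : Fin N → ℝ be strictly positive power limits. Define the energy efficiency η(P) = log₂(∑ₙ Pₙ hₙ + σ²) / (P_f + ∑ₙ Pₙ) on the box B = {P : ∀ n, 0 ≤ Pₙ ≤ Pmaxₙ}. Suppose P* ∈ B maximizes η over B. Then for all indices n and i, if hₙ < hᵢ and P*ᵢ < Pmaxᵢ, then P*ₙ = 0. (Paper's Theorem 1: to maximize EE, a user should not transmit if there exists another user with a strictly better channel whose optimal transmit power is strictly below its maximum.) -/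
/-!
Suppose `P*ₙ > 0` and `P*ᵢ < Pmaxᵢ` with `hₙ < hᵢ`. Moving a small amount `δ > 0` of power from
user `n` to user `i` stays in the box and keeps the total power, hence the denominator of `η`,
unchanged, while the received power `∑ Pⱼ hⱼ` grows by `δ (hᵢ - hₙ) > 0`. Since `log₂` is strictly
increasing, `η` strictly increases, contradicting optimality of `P*`.
-/

open Finset

section TransferPower

variable {ι : Type*} [DecidableEq ι]

def transferPower (P : ι → ℝ) (n i : ι) (δ : ℝ) : ι → ℝ :=
  P + Pi.single i δ - Pi.single n δ

theorem sum_transferPower [Fintype ι] (P : ι → ℝ) (n i : ι) (δ : ℝ) :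
    ∑ j, transferPower P n i δ j = ∑ j, P j := by
  simp [transferPower, sum_add_distrib, sum_sub_distrib]

theorem sum_transferPower_mul [Fintype ι] (P h : ι → ℝ) (n i : ι) (δ : ℝ) :
    ∑ j, transferPower P n i δ j * h j = ∑ j, P j * h j + δ * (h i - h n) := by
  simp only [transferPower, Pi.sub_apply, Pi.add_apply, Pi.single_apply, add_mul, sub_mul, ite_mul,
    zero_mul, sum_add_distrib, sum_sub_distrib, sum_ite_eq', mem_univ, if_true]
  ring

theorem transferPower_mem_box {P Pmax : ι → ℝ} {n i : ι} {δ : ℝ}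
    (hP : ∀ j, 0 ≤ P j ∧ P j ≤ Pmax j) (hni : n ≠ i) (hδ : 0 ≤ δ)
    (hδn : δ ≤ P n) (hδi : δ ≤ Pmax i - P i) :
    ∀ j, 0 ≤ transferPower P n i δ j ∧ transferPower P n i δ j ≤ Pmax j := by
  intro j
  obtain ⟨hP0, hPmax⟩ := hP j
  rcases eq_or_ne j i with rfl | hji
  · simp only [transferPower, Pi.sub_apply, Pi.add_apply, Pi.single_eq_same,
      Pi.single_eq_of_ne hni.symm, sub_zero]
    constructor <;> linarith
  rcases eq_or_ne j n with rfl | hjn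
  · simp only [transferPower, Pi.sub_apply, Pi.add_apply, Pi.single_eq_same,
      Pi.single_eq_of_ne hji, add_zero]
    constructor <;> linarith
  · simpa [transferPower, hji, hjn] using hP j

end TransferPower

theorem ee_optimal_weaker_user_silent_general
    (N : ℕ)
    (h : Fin N → ℝ) (hpos : ∀ n, 0 < h n)
    (σ2 : ℝ) (hσ2 : 0 < σ2)
    (Pf : ℝ) (hPf : 0 < Pf)
    (Pmax : Fin N → ℝ)
    (η : (Fin N → ℝ) → ℝ)
    (hη : ∀ P, η P = Real.logb 2 (∑ n, P n * h n + σ2) / (Pf + ∑ n, P n))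
    (Pstar : Fin N → ℝ)
    (hPstarB : ∀ n, 0 ≤ Pstar n ∧ Pstar n ≤ Pmax n)
    (hopt : ∀ P : Fin N → ℝ, (∀ n, 0 ≤ P n ∧ P n ≤ Pmax n) → η P ≤ η Pstar) :
    ∀ n i : Fin N, h n < h i → Pstar i < Pmax i → Pstar n = 0 := by
  intro n i hni hPi
  by_contra hne
  have hn0 : 0 < Pstar n := lt_of_le_of_ne (hPstarB n).1 (Ne.symm hne)
  set δ := min (Pstar n) (Pmax i - Pstar i)
  have hδ : 0 < δ := lt_min hn0 (sub_pos.mpr hPi)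
  have hbox := transferPower_mem_box hPstarB (ne_of_apply_ne h hni.ne) hδ.le
    (min_le_left _ _) (min_le_right _ _)
  refine (hopt _ hbox).not_gt ?_
  have hrx : 0 ≤ ∑ j, Pstar j * h j :=
    sum_nonneg fun j _ => mul_nonneg (hPstarB j).1 (hpos j).le
  have hden : 0 < Pf + ∑ j, Pstar j :=
    add_pos_of_pos_of_nonneg hPf (sum_nonneg fun j _ => (hPstarB j).1)
  have hgain : 0 < δ * (h i - h n) := mul_pos hδ (sub_pos.mpr hni)
  rw [hη, hη, sum_transferPower, sum_transferPower_mul]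
  refine div_lt_div_of_pos_right (Real.logb_lt_logb one_lt_two ?_ ?_) hden <;> linarith

/-- Paper's Theorem 1: at an EE-maximizing power allocation, a user does not
transmit if another user with a strictly better channel transmits strictly
below its maximum power. -/
theorem ee_optimal_weaker_user_silent
    (N : ℕ) (hN : 1 ≤ N)
    (h : Fin N → ℝ) (hpos : ∀ n, 0 < h n)
    (σ2 : ℝ) (hσ2 : 0 < σ2)
    (Pf : ℝ) (hPf : 0 < Pf)
    (Pmax : Fin N → ℝ) (hPmax : ∀ n, 0 < Pmax n)
    (η : (Fin N → ℝ) → ℝ)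
    (hη : ∀ P, η P = Real.logb 2 (∑ n, P n * h n + σ2) / (Pf + ∑ n, P n))
    (Pstar : Fin N → ℝ)
    (hPstarB : ∀ n, 0 ≤ Pstar n ∧ Pstar n ≤ Pmax n)
    (hopt : ∀ P : Fin N → ℝ, (∀ n, 0 ≤ P n ∧ P n ≤ Pmax n) → η P ≤ η Pstar) :
    ∀ n i : Fin N, h n < h i → Pstar i < Pmax i → Pstar n = 0 :=
  ee_optimal_weaker_user_silent_general N h hpos σ2 hσ2 Pf hPf Pmax η hη Pstar hPstarB hopt
end

section
/- Let N ≥ 1, h : Fin N → ℝ strictly positive, σ² > 0, P_f > 0, Pmax : Fin N → ℝ strictly positive, and define η(P) = log₂(∑ₙ Pₙ hₙ + σ²) / (P_f + ∑ₙ Pₙ). Let P lie in the box B = {P : ∀ n, 0 ≤ Pₙ ≤ Pmaxₙ}, and let n ≠ i be indices with hₙ < hᵢ, Pₙ > 0, and Pᵢ < Pmaxᵢ. For any Δ with 0 < Δ ≤ min(Pₙ, Pmaxᵢ − Pᵢ), define P' by P'ₙ = Pₙ − Δ, P'ᵢ = Pᵢ + Δ, and P'ₖ = Pₖ for all other k.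 Then P' ∈ B, ∑ₖ P'ₖ = ∑ₖ Pₖ, and η(P') > η(P). (Exchange argument used in the proof of Theorem 1.) -/
/-! Moving power `Δ` from user `n` to user `i` leaves the total power, hence the denominator of
the energy efficiency, unchanged, while the received power `∑ Pₖ hₖ` grows by `Δ (hᵢ - hₙ) > 0`;
since `log₂` is strictly increasing, the efficiency strictly increases. -/

open Finset

section Transfer

variable {ι R : Type*} [DecidableEq ι]

def transfer [Sub R] [Add R] (P : ι → R) (n i : ι) (Δ : R) : ι → R :=
  fun k => if k = n then P n - Δ else if k = i then P i + Δ else P k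

theorem transfer_eq_add_single_sub_single [AddCommGroup R] (P : ι → R) {n i : ι} (hne : n ≠ i)
    (Δ : R) : transfer P n i Δ = P + Pi.single i Δ - Pi.single n Δ := by
  funext k
  by_cases hkn : k = n
  · subst hkn
    simp [transfer, hne]
  · by_cases hki : k = i
    · subst hki
      simp [transfer, hkn]
    · simp [transfer, hkn, hki]

variable [Fintype ι]

theorem sum_transfer_mul [CommRing R] (P : ι → R) {n i : ι} (hne : n ≠ i) (Δ : R) (c : ι → R) :
    ∑ k, transfer P n i Δ k * c k = ∑ k, P k * c k + Δ * (c i - c n) := by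
  simp only [transfer_eq_add_single_sub_single P hne, Pi.add_apply, Pi.sub_apply, add_mul,
    sub_mul, sum_add_distrib, sum_sub_distrib, ← Pi.single_mul_left_apply,
    Fintype.sum_pi_single']
  ring

theorem sum_transfer [CommRing R] (P : ι → R) {n i : ι} (hne : n ≠ i) (Δ : R) :
    ∑ k, transfer P n i Δ k = ∑ k, P k := by
  simpa using sum_transfer_mul P hne Δ 1

theorem sum_mul_lt_sum_transfer_mul [CommRing R] [PartialOrder R] [IsStrictOrderedRing R]
    (P : ι → R) {n i : ι} (hne : n ≠ i) {Δ : R} (hΔ : 0 < Δ) {c : ι → R} (hc : c n < c i) :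
    ∑ k, P k * c k < ∑ k, transfer P n i Δ k * c k := by
  rw [sum_transfer_mul P hne]
  exact lt_add_of_pos_right _ (mul_pos hΔ (sub_pos.2 hc))

end Transfer

theorem transfer_mem_box {ι R : Type*} [DecidableEq ι] [AddCommGroup R] [LinearOrder R]
    [IsOrderedAddMonoid R] {P Pmax : ι → R} (hP : ∀ k, 0 ≤ P k ∧ P k ≤ Pmax k) {n i : ι} {Δ : R}
    (hΔ : 0 ≤ Δ) (hΔn : Δ ≤ P n) (hΔi : Δ ≤ Pmax i - P i) (k : ι) :
    0 ≤ transfer P n i Δ k ∧ transfer P n i Δ k ≤ Pmax k := by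
  unfold transfer
  split_ifs with hkn hki
  · subst hkn
    exact ⟨sub_nonneg.2 hΔn, (sub_le_self _ hΔ).trans (hP k).2⟩
  · subst hki
    exact ⟨add_nonneg (hP k).1 hΔ, le_sub_iff_add_le'.1 hΔi⟩
  · exact hP k

theorem logb_div_lt_logb_div_of_total_eq {ι : Type*} [Fintype ι] {h : ι → ℝ}
    (hh : ∀ k, 0 ≤ h k) {σ2 Pf : ℝ} (hσ2 : 0 < σ2) (hPf : 0 < Pf) {P Q : ι → ℝ}
    (hP : ∀ k, 0 ≤ P k) (htotal : ∑ k, Q k = ∑ k, P k)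
    (hgain : ∑ k, P k * h k < ∑ k, Q k * h k) :
    Real.logb 2 (∑ k, P k * h k + σ2) / (Pf + ∑ k, P k)
      < Real.logb 2 (∑ k, Q k * h k + σ2) / (Pf + ∑ k, Q k) := by
  have hrate : 0 < ∑ k, P k * h k + σ2 :=
    add_pos_of_nonneg_of_pos (sum_nonneg fun k _ => mul_nonneg (hP k) (hh k)) hσ2
  have hden : 0 < Pf + ∑ k, P k := add_pos_of_pos_of_nonneg hPf (sum_nonneg fun k _ => hP k)
  rw [htotal, div_lt_div_iff_of_pos_right hden]
  exact Real.logb_lt_logb one_lt_two hrate (by linarith)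

theorem ee_exchange_argument_general
    (N : ℕ)
    (h : Fin N → ℝ) (hpos : ∀ n, 0 < h n)
    (σ2 : ℝ) (hσ2 : 0 < σ2)
    (Pf : ℝ) (hPf : 0 < Pf)
    (Pmax : Fin N → ℝ)
    (η : (Fin N → ℝ) → ℝ)
    (hη : ∀ P, η P = Real.logb 2 (∑ n, P n * h n + σ2) / (Pf + ∑ n, P n))
    (P : Fin N → ℝ) (hPB : ∀ k, 0 ≤ P k ∧ P k ≤ Pmax k)
    (n i : Fin N) (hne : n ≠ i)
    (hni : h n < h i)
    (Δ : ℝ) (hΔpos : 0 < Δ) (hΔle : Δ ≤ min (P n) (Pmax i - P i))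
    (P' : Fin N → ℝ)
    (hP' : P' = fun k => if k = n then P n - Δ else if k = i then P i + Δ else P k) :
    (∀ k, 0 ≤ P' k ∧ P' k ≤ Pmax k) ∧ (∑ k, P' k = ∑ k, P k) ∧ η P < η P' := by
  obtain ⟨hΔn, hΔi⟩ := le_min_iff.mp hΔle
  have hP'transfer : P' = transfer P n i Δ := hP'
  subst hP'transfer
  refine ⟨transfer_mem_box hPB hΔpos.le hΔn hΔi, sum_transfer P hne Δ, ?_⟩
  rw [hη, hη]
  exact logb_div_lt_logb_div_of_total_eq (fun k => (hpos k).le) hσ2 hPf (fun k => (hPB k).1)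
    (sum_transfer P hne Δ) (sum_mul_lt_sum_transfer_mul P hne hΔpos hni)

/-- Exchange argument used in the proof of Theorem 1: moving power Δ from a
weaker-channel user n to a stronger-channel user i keeps the allocation
feasible, preserves the total power, and strictly increases the EE. -/
theorem ee_exchange_argument
    (N : ℕ) (hN : 1 ≤ N)
    (h : Fin N → ℝ) (hpos : ∀ n, 0 < h n)
    (σ2 : ℝ) (hσ2 : 0 < σ2)
    (Pf : ℝ) (hPf : 0 < Pf)
    (Pmax : Fin N → ℝ) (hPmax : ∀ n, 0 < Pmax n)
    (η : (Fin N → ℝ) → ℝ)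
    (hη : ∀ P, η P = Real.logb 2 (∑ n, P n * h n + σ2) / (Pf + ∑ n, P n))
    (P : Fin N → ℝ) (hPB : ∀ k, 0 ≤ P k ∧ P k ≤ Pmax k)
    (n i : Fin N) (hne : n ≠ i)
    (hni : h n < h i) (hPn : 0 < P n) (hPi : P i < Pmax i)
    (Δ : ℝ) (hΔpos : 0 < Δ) (hΔle : Δ ≤ min (P n) (Pmax i - P i))
    (P' : Fin N → ℝ)
    (hP' : P' = fun k => if k = n then P n - Δ else if k = i then P i + Δ else P k) :
    (∀ k, 0 ≤ P' k ∧ P' k ≤ Pmax k) ∧ (∑ k, P' k = ∑ k, P k) ∧ η P < η P' :=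
  ee_exchange_argument_general N h hpos σ2 hσ2 Pf hPf Pmax η hη P hPB n i hne hni Δ hΔpos hΔle P'
    hP'
end

section
/- Let N ≥ 1, let h, P : Fin N → ℝ with hₙ > 0 and Pₙ ≥ 0 for all n, and let σ² > 0. Then for every permutation π of Fin N, ∑ₙ log₂(1 + (P_{π(n)} h_{π(n)}) / (∑_{i > n} P_{π(i)} h_{π(i)} + σ²)) = ∑ₙ log₂(1 + (Pₙ hₙ) / (∑_{i > n} Pᵢ hᵢ + σ²)). That is, the SIC decoding order has no impact on the NOMA sum rate. -/
/-!
With received powers `gₙ = Pₙ hₙ ≥ 0`, the rate of the user decoded in position `n` is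
`log₂ (Tₙ / Tₙ₊₁)`, where `Tₙ = ∑_{i ≥ n} gᵢ + σ²` is the power still undecoded at step `n`.
The sum rate therefore telescopes to `log₂ (∑ₙ gₙ + σ²) - log₂ σ²`, which does not depend on
the decoding order.
-/

open Finset

theorem Real.logb_one_add_div {b x y : ℝ} (hy : 0 < y) (hxy : 0 < x + y) :
    Real.logb b (1 + x / y) = Real.logb b (x + y) - Real.logb b y := by
  rw [← Real.logb_div hxy.ne' hy.ne', add_div, div_self hy.ne', add_comm]

theorem Fin.sum_logb_one_add_div_sum_Ioi_add (b : ℝ) {σ : ℝ} (hσ : 0 < σ) :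
    ∀ {N : ℕ} (g : Fin N → ℝ), (∀ n, 0 ≤ g n) →
      ∑ n, Real.logb b (1 + g n / (∑ i ∈ Ioi n, g i + σ))
        = Real.logb b (∑ n, g n + σ) - Real.logb b σ
  | 0, _, _ => by simp
  | N + 1, g, hg => by
    have ih := Fin.sum_logb_one_add_div_sum_Ioi_add b hσ (fun i : Fin N => g i.succ)
      (fun i => hg i.succ)
    have htail : 0 < ∑ i : Fin N, g i.succ + σ :=
      add_pos_of_nonneg_of_pos (sum_nonneg fun i _ => hg i.succ) hσ
    rw [Fin.sum_univ_succ, Fin.sum_Ioi_zero]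
    simp only [Fin.sum_Ioi_succ]
    rw [ih, Real.logb_one_add_div htail (by linarith [hg 0]), Fin.sum_univ_succ g, add_assoc,
      sub_add_sub_cancel]

theorem noma_sum_rate_order_invariant_general
    (N : ℕ)
    (h P : Fin N → ℝ) (hpos : ∀ n, 0 < h n) (hPnn : ∀ n, 0 ≤ P n)
    (σ2 : ℝ) (hσ2 : 0 < σ2) (π : Equiv.Perm (Fin N)) :
    ∑ n : Fin N,
        Real.logb 2 (1 + P (π n) * h (π n) /
          ((∑ i ∈ Finset.univ.filter (fun i => n < i), P (π i) * h (π i)) + σ2))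
      = ∑ n : Fin N,
          Real.logb 2 (1 + P n * h n /
            ((∑ i ∈ Finset.univ.filter (fun i => n < i), P i * h i) + σ2)) := by
  have hpower (n : Fin N) : 0 ≤ P n * h n := mul_nonneg (hPnn n) (hpos n).le
  simp only [filter_lt_eq_Ioi]
  rw [Fin.sum_logb_one_add_div_sum_Ioi_add 2 hσ2 (fun n => P (π n) * h (π n)) (fun n => hpower _),
    Fin.sum_logb_one_add_div_sum_Ioi_add 2 hσ2 (fun n => P n * h n) hpower,
    Equiv.sum_comp π (fun n => P n * h n)]

/-- The SIC decoding order has no impact on the NOMA sum rate: for every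
permutation π of the users, the sum rate under decoding order π equals the
sum rate under the identity order. -/
theorem noma_sum_rate_order_invariant
    (N : ℕ) (hN : 1 ≤ N)
    (h P : Fin N → ℝ) (hpos : ∀ n, 0 < h n) (hPnn : ∀ n, 0 ≤ P n)
    (σ2 : ℝ) (hσ2 : 0 < σ2) (π : Equiv.Perm (Fin N)) :
    ∑ n : Fin N,
        Real.logb 2 (1 + P (π n) * h (π n) /
          ((∑ i ∈ Finset.univ.filter (fun i => n < i), P (π i) * h (π i)) + σ2))
      = ∑ n : Fin N,
          Real.logb 2 (1 + P n * h n /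
            ((∑ i ∈ Finset.univ.filter (fun i => n < i), P i * h i) + σ2)) :=
  noma_sum_rate_order_invariant_general N h P hpos hPnn σ2 hσ2 π
end

section
/- Let K be a nonempty compact set in ℝᵐ, let Nu, D : ℝᵐ → ℝ be continuous with D(P) > 0 for all P ∈ K, and let β ∈ ℝ. Suppose P' ∈ K maximizes Q ↦ Nu(Q) − β·D(Q) over K and Nu(P') − β·D(P') = 0. Then β = sup_{P ∈ K} Nu(P)/D(P); i.e., a fixed point of the Dinkelbach iteration attains the maximum of the fractional objective. -/
/-! Since `D > 0` on `K`, the subtractive form `Nu Q - β * D Q` has the sign of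
`Nu Q / D Q - β`; a zero maximum thus bounds every ratio by `β` and attains it at `P'`. -/

theorem isGreatest_div_image_of_sub_mul_max_eq_zero {α 𝕜 : Type*} [Field 𝕜] [LinearOrder 𝕜]
    [IsStrictOrderedRing 𝕜] {s : Set α} {f g : α → 𝕜} {β : 𝕜} {x₀ : α}
    (hg : ∀ x ∈ s, 0 < g x) (hx₀ : x₀ ∈ s)
    (hmax : ∀ x ∈ s, f x - β * g x ≤ f x₀ - β * g x₀) (hzero : f x₀ - β * g x₀ = 0) :
    IsGreatest ((fun x => f x / g x) '' s) β := by
  have hattained : f x₀ / g x₀ = β := by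
    rw [div_eq_iff (hg x₀ hx₀).ne']
    linarith
  have hbound : ∀ x ∈ s, f x / g x ≤ β := fun x hx => by
    rw [div_le_iff₀ (hg x hx)]
    linarith [hmax x hx]
  refine ⟨⟨x₀, hx₀, hattained⟩, ?_⟩
  rintro _ ⟨x, hx, rfl⟩
  exact hbound x hx

theorem dinkelbach_fixed_point_optimal_general
    (m : ℕ) (K : Set (Fin m → ℝ))
    (Nu D : (Fin m → ℝ) → ℝ)
    (hDpos : ∀ P ∈ K, 0 < D P)
    (β : ℝ) (P' : Fin m → ℝ) (hP' : P' ∈ K)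
    (hmax : ∀ Q ∈ K, Nu Q - β * D Q ≤ Nu P' - β * D P')
    (hzero : Nu P' - β * D P' = 0) :
    β = sSup ((fun P => Nu P / D P) '' K) :=
  (isGreatest_div_image_of_sub_mul_max_eq_zero hDpos hP' hmax hzero).csSup_eq.symm

/-- A fixed point of the Dinkelbach iteration attains the maximum of the
fractional objective: if P' maximizes Q ↦ Nu(Q) − β·D(Q) over the compact set
K and the maximal value is 0, then β = sup_{P ∈ K} Nu(P)/D(P). -/
theorem dinkelbach_fixed_point_optimal
    (m : ℕ) (K : Set (Fin m → ℝ)) (hK : IsCompact K) (hKne : K.Nonempty)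
    (Nu D : (Fin m → ℝ) → ℝ) (hNu : Continuous Nu) (hD : Continuous D)
    (hDpos : ∀ P ∈ K, 0 < D P)
    (β : ℝ) (P' : Fin m → ℝ) (hP' : P' ∈ K)
    (hmax : ∀ Q ∈ K, Nu Q - β * D Q ≤ Nu P' - β * D P')
    (hzero : Nu P' - β * D P' = 0) :
    β = sSup ((fun P => Nu P / D P) '' K) :=
  dinkelbach_fixed_point_optimal_general m K Nu D hDpos β P' hP' hmax hzero
end

section
/- Let K be a nonempty compact set in ℝᵐ, let Nu, D : ℝᵐ → ℝ be continuous with D(P) > 0 for all P ∈ K, and set β* = sup_{P ∈ K} Nu(P)/D(P) (attained since K is compact). Then max_{P ∈ K} (Nu(P) − β*·D(P)) = 0; moreover for any β ∈ ℝ, max_{P ∈ K} (Nu(P) − β·D(P)) = 0 if and only if β = β*. -/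
/-!
Since `D > 0` on `K`, the sign of `Nu P - β * D P` is the sign of `Nu P / D P - β`. Hence `0` is
the maximum of `Nu - β * D` on `K` exactly when `β` is the maximum of the ratio `Nu / D` on `K`,
which by compactness exists and equals `β*`; a maximum being unique, `β = β*`.
-/

theorem isGreatest_image_iff_of_forall_mem {α β γ : Type*} [Preorder β] [Preorder γ]
    {K : Set α} {f : α → β} {g : α → γ} {a : β} {b : γ}
    (hle : ∀ x ∈ K, f x ≤ a ↔ g x ≤ b) (heq : ∀ x ∈ K, f x = a ↔ g x = b) :
    IsGreatest (f '' K) a ↔ IsGreatest (g '' K) b := by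
  simp only [IsGreatest, mem_upperBounds, Set.forall_mem_image]
  constructor
  · rintro ⟨⟨x, hx, hfx⟩, hub⟩
    exact ⟨⟨x, hx, (heq x hx).1 hfx⟩, fun y hy => (hle y hy).1 (hub hy)⟩
  · rintro ⟨⟨x, hx, hgx⟩, hub⟩
    exact ⟨⟨x, hx, (heq x hx).2 hgx⟩, fun y hy => (hle y hy).2 (hub hy)⟩

theorem isGreatest_sub_mul_image_zero_iff {α 𝕜 : Type*} [Field 𝕜] [LinearOrder 𝕜]
    [IsStrictOrderedRing 𝕜] {K : Set α} {Nu D : α → 𝕜} (hD : ∀ P ∈ K, 0 < D P) (β : 𝕜) :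
    IsGreatest ((fun P => Nu P - β * D P) '' K) 0 ↔ IsGreatest ((fun P => Nu P / D P) '' K) β := by
  refine isGreatest_image_iff_of_forall_mem (fun P hP => ?_) (fun P hP => ?_)
  · rw [sub_nonpos, div_le_iff₀ (hD P hP)]
  · rw [sub_eq_zero, div_eq_iff (hD P hP).ne']

/-- Dinkelbach's characterization of fractional programming: with
β* = sup_{P∈K} Nu(P)/D(P) on a nonempty compact set K (the supremum being
attained), the parametric problem max_{P∈K} (Nu(P) − β·D(P)) has maximal value
0 when β = β*, and for any β this maximum equals 0 if and only if β = β*. -/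
theorem dinkelbach_root_characterization
    (m : ℕ) (K : Set (Fin m → ℝ)) (hK : IsCompact K) (hKne : K.Nonempty)
    (Nu D : (Fin m → ℝ) → ℝ) (hNu : Continuous Nu) (hD : Continuous D)
    (hDpos : ∀ P ∈ K, 0 < D P)
    (βstar : ℝ) (hβstar : βstar = sSup ((fun P => Nu P / D P) '' K)) :
    IsGreatest ((fun P => Nu P - βstar * D P) '' K) 0 ∧
    (∀ β : ℝ, IsGreatest ((fun P => Nu P - β * D P) '' K) 0 ↔ β = βstar) := by
  have hratio : ContinuousOn (fun P => Nu P / D P) K :=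
    hNu.continuousOn.div hD.continuousOn fun P hP => (hDpos P hP).ne'
  have hmax : IsGreatest ((fun P => Nu P / D P) '' K) βstar :=
    hβstar ▸ (hK.image_of_continuousOn hratio).isGreatest_sSup (hKne.image _)
  have key := isGreatest_sub_mul_image_zero_iff (Nu := Nu) hDpos
  exact ⟨(key βstar).2 hmax,
    fun β => (key β).trans ⟨fun h => h.unique hmax, fun h => h ▸ hmax⟩⟩
end
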